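/- Let ζ₊ and ζ₀ in [0,π] be defined by cos ζ₊ = u₊ and cos ζ₀ = u₀ where u₀ = (-308 + 27√41)/565 and u₊ is the larger root given in the context. Then the function h(ζ) := c₀·cos 2ζ + c₁·sin 2ζ + c₂·cos ζ + c₃·sin ζ + c₄ with c₀ = -4197 + 977√41, c₁ = 24(-633 + 113√41), c₂ = 4(-14667 + 2191√41), c₃ = 48(-843 + 139√41), c₄ = -53775 + 8403√41, satisfies h(ζ) ≥ 0 for all ζ in an interval [ζ_*, π] containing ζ₀ in its interior whenever h(ζ_*) > 0; in particular, h(ζ) ≥ 0 for all ζ ∈ [0.13, π]. -/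

import Mathlib

noncomputable def c0 : ℝ := -4197 + 977*Real.sqrt 41
noncomputable def c1 : ℝ := 24*(-633 + 113*Real.sqrt 41)
noncomputable def c2 : ℝ := 4*(-14667 + 2191*Real.sqrt 41)
noncomputable def c3 : ℝ := 48*(-843 + 139*Real.sqrt 41)
noncomputable def c4 : ℝ := -53775 + 8403*Real.sqrt 41

noncomputable def h (ζ : ℝ) : ℝ :=
  c0*Real.cos (2*ζ) + c1*Real.sin (2*ζ) + c2*Real.cos ζ + c3*Real.sin ζ + c4

noncomputable def u0 : ℝ := (-308 + 27*Real.sqrt 41)/565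

/-- `ζ₀ = arccos u₀` is the larger zero of `h` in `[0,π]`. -/
noncomputable def ζ0 : ℝ := Real.arccos u0

/-!
With `u = cos ζ` and `s = sin ζ ≥ 0`, `h ζ = cosPart u + s * sinPart u` with `cosPart` quadratic
and `sinPart` linear, and `(1 - u²) sinPart² - cosPart² = quadFactor u * (u - u₀)²` for a concave
quadratic `quadFactor`. So the sign of `h` is decided by the signs of these three polynomials:
on `[0, π]`, `h ζ ≥ 0` exactly when `cos ζ ≤ 0` or `quadFactor (cos ζ) ≥ 0`, i.e. when
`cos ζ ≤ u₊ = cos ζ₊`, the larger root of `quadFactor`. This condition passes from `cos ζ` to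
every smaller value, hence from `ζ` to every larger angle, and it holds from `0.13` on since
`cos 0.13 < 0.997 < u₊`.
-/

open Real

lemma sqrt41_bounds : (6.4031242 : ℝ) < √41 ∧ √41 < 6.4031243 := by
  have h41 : √41 ^ 2 = 41 := sq_sqrt (by norm_num)
  constructor <;> nlinarith [sqrt_nonneg 41]

noncomputable def cosPart (u : ℝ) : ℝ := 2 * c0 * u ^ 2 + c2 * u + (c4 - c0)

noncomputable def sinPart (u : ℝ) : ℝ := 2 * c1 * u + c3

noncomputable def quadFactor (u : ℝ) : ℝ :=
  (-2356400264 + 362409384 * √41) * u ^ 2 + (-3826331504 + 600466224 * √41) * u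
    + (-1726559240 + 272326440 * √41)

lemma h_eq_cosPart_add_sin_mul_sinPart (ζ : ℝ) :
    h ζ = cosPart (cos ζ) + sin ζ * sinPart (cos ζ) := by
  rw [h, cosPart, sinPart, cos_two_mul, sin_two_mul]
  ring

lemma one_sub_sq_mul_sinPart_sq_sub_cosPart_sq (u : ℝ) :
    (1 - u ^ 2) * sinPart u ^ 2 - cosPart u ^ 2 = quadFactor u * (u - u0) ^ 2 := by
  have h41 : √41 ^ 2 = 41 := sq_sqrt (by norm_num)
  simp only [cosPart, sinPart, quadFactor, c0, c1, c2, c3, c4, u0]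
  linear_combination ((478933552468 / 63845 : ℝ) + (2638589979184 / 319225 : ℝ) * u
    + (-12536430336816 / 319225 : ℝ) * u ^ 2 + (-40674469184 / 565 : ℝ) * u ^ 3
    + (-33237892 : ℝ) * u ^ 4 + (-39705194952 / 63845 : ℝ) * √41
    + (-437739877296 / 319225 : ℝ) * √41 * u + (-264196440936 / 319225 : ℝ) * √41 * u ^ 2) * h41

lemma u0_neg : u0 < 0 := by
  have := sqrt41_bounds
  unfold u0
  apply div_neg_of_neg_of_pos <;> linarith

section Signs

variable {u : ℝ}

lemma quadFactor_neg (hu₁ : -1 ≤ u) (hu₂ : u ≤ -0.519) : quadFactor u < 0 := by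
  obtain ⟨hlb, hub⟩ := sqrt41_bounds
  unfold quadFactor
  nlinarith [mul_nonneg (by linarith : (0:ℝ) ≤ -0.519 - u) (by linarith : (0:ℝ) ≤ u + 1)]

lemma quadFactor_pos (hu₁ : -0.46 ≤ u) (hu₂ : u ≤ 0.997) : 0 < quadFactor u := by
  obtain ⟨hlb, hub⟩ := sqrt41_bounds
  unfold quadFactor
  nlinarith [mul_nonneg (by linarith : (0:ℝ) ≤ u + 0.46) (by linarith : (0:ℝ) ≤ 0.997 - u)]

lemma quadFactor_antitoneOn : AntitoneOn quadFactor (Set.Ici (1 / 2)) := by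
  intro u hu v hv huv
  obtain ⟨hlb, hub⟩ := sqrt41_bounds
  simp only [Set.mem_Ici] at hu hv
  unfold quadFactor
  nlinarith [mul_nonneg (by linarith : (0:ℝ) ≤ v - u) (by linarith : (0:ℝ) ≤ u + v - 1)]

lemma sinPart_nonneg (hu : -0.519 ≤ u) : 0 ≤ sinPart u := by
  obtain ⟨hlb, hub⟩ := sqrt41_bounds
  unfold sinPart c1 c3
  nlinarith

lemma cosPart_nonneg (hu : u ≤ -0.46) : 0 ≤ cosPart u := by
  obtain ⟨hlb, hub⟩ := sqrt41_bounds
  unfold cosPart c0 c2 c4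
  nlinarith [sq_nonneg (u + 0.46)]

lemma cosPart_neg (hu₁ : 0.997 ≤ u) (hu₂ : u ≤ 1) : cosPart u < 0 := by
  obtain ⟨hlb, hub⟩ := sqrt41_bounds
  unfold cosPart c0 c2 c4
  nlinarith [mul_nonneg (by linarith : (0:ℝ) ≤ u - 0.997) (by linarith : (0:ℝ) ≤ 1 - u)]

end Signs

def NonnegCond (u : ℝ) : Prop := u ≤ 0 ∨ 0 ≤ quadFactor u

lemma nonnegCond_of_le {u : ℝ} (hu : u ≤ 0.997) : NonnegCond u := by
  rcases le_or_gt u 0 with hu₀ | hu₀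
  · exact Or.inl hu₀
  · exact Or.inr (quadFactor_pos (by linarith) hu).le

lemma NonnegCond.of_le {u v : ℝ} (huv : u ≤ v) (hv : NonnegCond v) : NonnegCond u := by
  rcases le_or_gt u 0.997 with hu | hu
  · exact nonnegCond_of_le hu
  · have hv' : 0 ≤ quadFactor v := hv.resolve_left (by linarith)
    exact Or.inr (hv'.trans (quadFactor_antitoneOn (by norm_num [Set.mem_Ici]; linarith)
      (by norm_num [Set.mem_Ici]; linarith) huv))

lemma cosPart_add_mul_sinPart_nonneg {u s : ℝ} (hu₁ : -1 ≤ u) (hs : 0 ≤ s)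
    (hs2 : s ^ 2 = 1 - u ^ 2) (hu : NonnegCond u) : 0 ≤ cosPart u + s * sinPart u := by
  have key := one_sub_sq_mul_sinPart_sq_sub_cosPart_sq u
  by_cases hq : 0 ≤ quadFactor u
  · have hsin : 0 ≤ s * sinPart u := by
      refine mul_nonneg hs (sinPart_nonneg ?_)
      by_contra! hlt
      exact (quadFactor_neg hu₁ hlt.le).not_ge hq
    have hsq : cosPart u ^ 2 ≤ (s * sinPart u) ^ 2 := by
      nlinarith [mul_nonneg hq (sq_nonneg (u - u0))]
    linarith [(abs_le_of_sq_le_sq' hsq hsin).1]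
  · have hu₀ : u < -0.46 := by
      by_contra! hge
      exact hq (quadFactor_pos hge (by linarith [hu.resolve_right hq])).le
    have hcos := cosPart_nonneg hu₀.le
    have hsq : (s * sinPart u) ^ 2 ≤ cosPart u ^ 2 := by
      nlinarith [mul_nonpos_of_nonpos_of_nonneg (not_le.1 hq).le (sq_nonneg (u - u0))]
    linarith [(abs_le_of_sq_le_sq' hsq hcos).1]

lemma cosPart_add_mul_sinPart_neg {u s : ℝ} (hu₁ : u ≤ 1) (hs2 : s ^ 2 = 1 - u ^ 2)
    (hu : ¬NonnegCond u) : cosPart u + s * sinPart u < 0 := by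
  simp only [NonnegCond, not_or, not_le] at hu
  obtain ⟨hu₀, hq⟩ := hu
  have hu997 : 0.997 < u := by
    by_contra! hle
    exact (quadFactor_pos (by linarith) hle).not_gt hq
  have hcos := cosPart_neg hu997.le hu₁
  have hdist : 0 < (u - u0) ^ 2 := by nlinarith [u0_neg]
  have hsq : (s * sinPart u) ^ 2 < cosPart u ^ 2 := by
    nlinarith [one_sub_sq_mul_sinPart_sq_sub_cosPart_sq u, mul_neg_of_neg_of_pos hq hdist]
  rw [← neg_sq (cosPart u)] at hsq
  linarith [(abs_lt_of_sq_lt_sq' hsq (by linarith)).2]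

lemma h_nonneg_iff {ζ : ℝ} (h₀ : 0 ≤ ζ) (hπ : ζ ≤ π) : 0 ≤ h ζ ↔ NonnegCond (cos ζ) := by
  have hs := sin_nonneg_of_nonneg_of_le_pi h₀ hπ
  rw [h_eq_cosPart_add_sin_mul_sinPart]
  constructor
  · intro hnn
    by_contra hu
    exact (cosPart_add_mul_sinPart_neg (cos_le_one ζ) (sin_sq ζ) hu).not_ge hnn
  · exact cosPart_add_mul_sinPart_nonneg (neg_one_le_cos ζ) hs (sin_sq ζ)

lemma h_nonneg_of_le {a b : ℝ} (ha : 0 ≤ a) (hab : a ≤ b) (hb : b ≤ π) (hna : 0 ≤ h a) :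
    0 ≤ h b :=
  (h_nonneg_iff (ha.trans hab) hb).2 <|
    ((h_nonneg_iff ha (hab.trans hb)).1 hna).of_le (cos_le_cos_of_nonneg_of_le_pi ha hb hab)

lemma cos_lt_of_ge_013 {ζ : ℝ} (h₁ : 0.13 ≤ ζ) (hπ : ζ ≤ π) : cos ζ < 0.997 := by
  have hcos : cos 0.13 ≤ 1 - 2 / π ^ 2 * 0.13 ^ 2 :=
    cos_le_one_sub_mul_cos_sq (by rw [abs_of_pos (by norm_num)]; linarith [pi_gt_three])
  have hπsq : 2 / π ^ 2 > 0.2 := by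
    rw [gt_iff_lt, lt_div_iff₀ (by positivity)]
    nlinarith [pi_lt_d2, pi_pos]
  calc cos ζ ≤ cos 0.13 := cos_le_cos_of_nonneg_of_le_pi (by norm_num) hπ h₁
    _ < 0.997 := by nlinarith

theorem stmt5 :
    (∀ ζstar : ℝ, 0 ≤ ζstar → ζstar ≤ Real.pi → ζstar < ζ0 → 0 < h ζstar →
      ∀ ζ : ℝ, ζstar ≤ ζ → ζ ≤ Real.pi → 0 ≤ h ζ) ∧
    (∀ ζ : ℝ, (0.13 : ℝ) ≤ ζ → ζ ≤ Real.pi → 0 ≤ h ζ) :=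
  ⟨fun _ h₀ _ _ hpos _ hle hπ ↦ h_nonneg_of_le h₀ hle hπ hpos.le,
    fun _ h₁ hπ ↦
      (h_nonneg_iff (by linarith) hπ).2 (nonnegCond_of_le (cos_lt_of_ge_013 h₁ hπ).le)⟩
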